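/- For every interpretation (M, γ) of the logic L, the set Φ_p = {φ propositional : γ(φ) = ⊤} is a prime theory of IPC: it is consistent, deductively closed under IPC, and φ ∨ ψ ∈ Φ_p implies φ ∈ Φ_p or ψ ∈ Φ_p. Moreover, (M,γ) ⊨ □φ iff φ ∈ Φ_p, for all propositional φ. -/

import Mathlib

/-- A (proper) filter on a Heyting algebra. -/
structure IsFilter {H : Type*} [HeytingAlgebra H] (F : Set H) : Prop where
  nonempty : F.Nonempty
  mem_of_le : ∀ {a b : H}, a ∈ F → a ≤ b → b ∈ F
  inf_mem : ∀ {a b : H}, a ∈ F → b ∈ F → a ⊓ b ∈ F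
  bot_not_mem : ⊥ ∉ F

/-- An ultrafilter: a (proper) filter maximal w.r.t. inclusion. -/
def IsUltrafilter {H : Type*} [HeytingAlgebra H] (F : Set H) : Prop :=
  IsFilter F ∧ ∀ G : Set H, IsFilter G → F ⊆ G → G = F

/-- Formulas over variables ℕ with ⊥, →, ∨, ∧ and □. -/
inductive Fm : Type where
  | var : ℕ → Fm
  | bot : Fm
  | imp : Fm → Fm → Fm
  | or  : Fm → Fm → Fm
  | and : Fm → Fm → Fm
  | box : Fm → Fm
deriving DecidableEq

namespace Fm

def neg (φ : Fm) : Fm := imp φ bot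
def top : Fm := neg bot
/-- Material biconditional φ ↔ ψ. -/
def biimp (φ ψ : Fm) : Fm := and (imp φ ψ) (imp ψ φ)
/-- Strict equivalence φ ≡ ψ := □(φ→ψ) ∧ □(ψ→φ). -/
def eqv (φ ψ : Fm) : Fm := and (box (imp φ ψ)) (box (imp ψ φ))

/-- Simultaneous substitution. -/
def substAll (σ : ℕ → Fm) : Fm → Fm
  | var n => σ n
  | bot => bot
  | imp a b => imp (substAll σ a) (substAll σ b)
  | or a b => or (substAll σ a) (substAll σ b)
  | and a b => and (substAll σ a) (substAll σ b)
  | box a => box (substAll σ a)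

/-- Substitution of ρ for the variable x. -/
def subst (x : ℕ) (ρ : Fm) (χ : Fm) : Fm :=
  substAll (fun n => if n = x then ρ else var n) χ

/-- Formulas without the modal operator (propositional formulas). -/
def BoxFree : Fm → Prop
  | var _ => True
  | bot => True
  | imp a b => BoxFree a ∧ BoxFree b
  | or a b => BoxFree a ∧ BoxFree b
  | and a b => BoxFree a ∧ BoxFree b
  | box _ => False

end Fm

/-- Hilbert-style intuitionistic propositional calculus. -/
inductive IPC : Set Fm → Fm → Prop where
  | hyp {Φ φ} : φ ∈ Φ → IPC Φ φ
  | a1 {Φ} (φ ψ) : IPC Φ (.imp φ (.imp ψ φ))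
  | a2 {Φ} (φ ψ χ) :
      IPC Φ (.imp (.imp φ (.imp ψ χ)) (.imp (.imp φ ψ) (.imp φ χ)))
  | a3 {Φ} (φ ψ) : IPC Φ (.imp φ (.imp ψ (.and φ ψ)))
  | a4 {Φ} (φ ψ) : IPC Φ (.imp (.and φ ψ) φ)
  | a5 {Φ} (φ ψ) : IPC Φ (.imp (.and φ ψ) ψ)
  | a6 {Φ} (φ ψ) : IPC Φ (.imp φ (.or φ ψ))
  | a7 {Φ} (φ ψ) : IPC Φ (.imp ψ (.or φ ψ))
  | a8 {Φ} (φ ψ χ) :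
      IPC Φ (.imp (.imp φ χ) (.imp (.imp ψ χ) (.imp (.or φ ψ) χ)))
  | a9 {Φ} (φ) : IPC Φ (.imp .bot φ)
  | mp {Φ φ ψ} : IPC Φ (.imp φ ψ) → IPC Φ φ → IPC Φ ψ

/-- An intuitionistic propositional tautology or a substitution-instance thereof. -/
def IsIntAx (φ : Fm) : Prop :=
  ∃ (φ₀ : Fm) (σ : ℕ → Fm), φ₀.BoxFree ∧ IPC ∅ φ₀ ∧ φ = φ₀.substAll σ

/-- Axioms (i)-(iv) of the logic L. -/
inductive LAx : Fm → Prop where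
  | i {φ} : IsIntAx φ → LAx φ
  | ii (φ) : LAx (.imp (.box φ) φ)
  | iii (φ ψ χ) :
      LAx (.imp (.box (.imp φ ψ)) (.imp (.box (.imp ψ χ)) (.box (.imp φ χ))))
  | iv (φ ψ) : LAx (.imp (.box (.or φ ψ)) (.or (.box φ) (.box ψ)))

/-- Derivability in the modal logic L: axioms (i)-(iv), rules MP and Axiom
Necessitation, plus theorem schemes tertium non datur and SP. -/
inductive L : Set Fm → Fm → Prop where
  | hyp {Φ φ} : φ ∈ Φ → L Φ φ
  | ax {Φ φ} : LAx φ → L Φ φ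
  | an {Φ φ} : LAx φ → L Φ (.box φ)
  | tnd {Φ} (φ) : L Φ (.or φ (Fm.neg φ))
  | sp {Φ} (φ ψ χ : Fm) (x : ℕ) :
      L Φ (.imp (Fm.eqv φ ψ) (Fm.eqv (χ.subst x φ) (χ.subst x ψ)))
  | mp {Φ φ ψ} : L Φ (.imp φ ψ) → L Φ φ → L Φ ψ

/-- A model: a Heyting algebra with an ultrafilter TRUE and an operation f_□
satisfying the four truth conditions. -/
structure LModel (H : Type*) [HeytingAlgebra H] where
  TRUE : Set H
  ultra : IsUltrafilter TRUE
  fbox : H → H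
  cond1 : ∀ m : H, fbox m ≤ m
  cond2 : ∀ a b c : H, fbox (a ⇨ b) ≤ fbox (b ⇨ c) ⇨ fbox (a ⇨ c)
  cond3 : ∀ a b : H, fbox (a ⊔ b) ≤ fbox a ⊔ fbox b
  cond4 : ∀ m : H, fbox m ∈ TRUE ↔ m = ⊤

/-- Canonical extension of an assignment γ : V → M to all formulas. -/
def Fm.eval {H : Type*} [HeytingAlgebra H] (M : LModel H) (γ : ℕ → H) : Fm → H
  | .var n => γ n
  | .bot => ⊥
  | .imp a b => a.eval M γ ⇨ b.eval M γ
  | .or a b => a.eval M γ ⊔ b.eval M γ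
  | .and a b => a.eval M γ ⊓ b.eval M γ
  | .box a => M.fbox (a.eval M γ)

/-- Satisfaction: (M,γ) ⊨ φ iff γ(φ) ∈ TRUE. -/
def LModel.Sat {H : Type*} [HeytingAlgebra H] (M : LModel H) (γ : ℕ → H)
    (φ : Fm) : Prop :=
  φ.eval M γ ∈ M.TRUE

/-!
Soundness of IPC for Heyting algebras makes `{φ | γ(φ) = ⊤}` deductively closed, and it omits
`⊥` because `⊥ ≠ ⊤` (the ultrafilter `TRUE` contains `⊤` but not `⊥`). Condition 4 says exactly
that `□φ` holds iff `γ(φ) = ⊤`. Primeness follows from condition 3: if `a ⊔ b = ⊤` then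
`f_□ a ⊔ f_□ b ≥ f_□ (a ⊔ b) ∈ TRUE`, and ultrafilters of a distributive lattice are prime.
-/

section

variable {H : Type*} [HeytingAlgebra H]

theorem IsFilter.top_mem {F : Set H} (hF : IsFilter F) : ⊤ ∈ F :=
  hF.nonempty.elim fun _ ha => hF.mem_of_le ha le_top

theorem IsFilter.bot_ne_top {F : Set H} (hF : IsFilter F) : (⊥ : H) ≠ ⊤ :=
  fun h => hF.bot_not_mem (h ▸ hF.top_mem)

theorem IsFilter.isFilter_setOf_inf_le {F : Set H} (hF : IsFilter F) {a : H}
    (ha : ∀ f ∈ F, f ⊓ a ≠ ⊥) : IsFilter {c | ∃ f ∈ F, f ⊓ a ≤ c} where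
  nonempty := ⟨⊤, ⊤, hF.top_mem, le_top⟩
  mem_of_le := fun ⟨f, hf, hfc⟩ hcd => ⟨f, hf, hfc.trans hcd⟩
  inf_mem := fun ⟨f, hf, hfc⟩ ⟨g, hg, hgd⟩ => ⟨f ⊓ g, hF.inf_mem hf hg,
    le_inf ((inf_le_inf_right a inf_le_left).trans hfc)
      ((inf_le_inf_right a inf_le_right).trans hgd)⟩
  bot_not_mem := fun ⟨f, hf, hfb⟩ => ha f hf (le_bot_iff.mp hfb)

theorem IsUltrafilter.exists_inf_eq_bot_of_notMem {F : Set H} (hF : IsUltrafilter F) {a : H}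
    (ha : a ∉ F) : ∃ f ∈ F, f ⊓ a = ⊥ := by
  by_contra! hmeet
  have hgen : {c | ∃ f ∈ F, f ⊓ a ≤ c} = F :=
    hF.2 _ (hF.1.isFilter_setOf_inf_le hmeet) fun f hf => ⟨f, hf, inf_le_left⟩
  exact ha (hgen ▸ ⟨⊤, hF.1.top_mem, inf_le_right⟩)

theorem IsUltrafilter.mem_or_mem_of_sup_mem {F : Set H} (hF : IsUltrafilter F) {a b : H}
    (hab : a ⊔ b ∈ F) : a ∈ F ∨ b ∈ F := by
  by_contra! hnot
  obtain ⟨f, hf, hfa⟩ := hF.exists_inf_eq_bot_of_notMem hnot.1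
  obtain ⟨g, hg, hgb⟩ := hF.exists_inf_eq_bot_of_notMem hnot.2
  have hdisj : f ⊓ g ⊓ (a ⊔ b) = ⊥ := by
    rw [inf_sup_left, ← le_bot_iff]
    exact sup_le (hfa ▸ inf_le_inf_right a inf_le_left) (hgb ▸ inf_le_inf_right b inf_le_right)
  exact hF.1.bot_not_mem (hdisj ▸ hF.1.inf_mem (hF.1.inf_mem hf hg) hab)

theorem IPC.eval_eq_top (M : LModel H) (γ : ℕ → H) {Φ : Set Fm} {φ : Fm} (h : IPC Φ φ)
    (hΦ : ∀ ψ ∈ Φ, ψ.eval M γ = ⊤) : φ.eval M γ = ⊤ := by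
  induction h with
  | hyp hψ => exact hΦ _ hψ
  | mp _ _ ihImp ihAnte => simpa [Fm.eval, ihAnte] using ihImp
  | a2 => simp [Fm.eval, himp_himp, inf_comm]
  | a8 => simp [Fm.eval, sup_himp_distrib, himp_himp]
  | _ => simp [Fm.eval]

namespace LModel

theorem eq_top_or_eq_top_of_sup_eq_top (M : LModel H) {a b : H} (h : a ⊔ b = ⊤) :
    a = ⊤ ∨ b = ⊤ := by
  have hsup : M.fbox a ⊔ M.fbox b ∈ M.TRUE :=
    M.ultra.1.mem_of_le ((M.cond4 _).2 h) (M.cond3 a b)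
  exact (M.ultra.mem_or_mem_of_sup_mem hsup).imp (M.cond4 a).1 (M.cond4 b).1

theorem sat_box_iff (M : LModel H) (γ : ℕ → H) (φ : Fm) : M.Sat γ (.box φ) ↔ φ.eval M γ = ⊤ :=
  M.cond4 _

end LModel

end

/-- For every interpretation (M,γ), the set of □-free formulas denoting ⊤ is
a prime IPC-theory, and □ is a truth predicate for it. -/
theorem box_is_intuitionistic_truth_predicate {H : Type*} [HeytingAlgebra H]
    (M : LModel H) (γ : ℕ → H) :
    ¬ IPC {ψ : Fm | ψ.BoxFree ∧ ψ.eval M γ = ⊤} .bot ∧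
    (∀ ψ : Fm, IPC {ψ : Fm | ψ.BoxFree ∧ ψ.eval M γ = ⊤} ψ → ψ.BoxFree →
      ψ ∈ {ψ : Fm | ψ.BoxFree ∧ ψ.eval M γ = ⊤}) ∧
    (∀ φ ψ : Fm, (Fm.or φ ψ) ∈ {ψ : Fm | ψ.BoxFree ∧ ψ.eval M γ = ⊤} →
      φ ∈ {ψ : Fm | ψ.BoxFree ∧ ψ.eval M γ = ⊤} ∨
      ψ ∈ {ψ : Fm | ψ.BoxFree ∧ ψ.eval M γ = ⊤}) ∧
    (∀ φ : Fm, φ.BoxFree →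
      (M.Sat γ (.box φ) ↔ φ ∈ {ψ : Fm | ψ.BoxFree ∧ ψ.eval M γ = ⊤})) := by
  have hsound : ∀ {ψ : Fm}, IPC {ψ : Fm | ψ.BoxFree ∧ ψ.eval M γ = ⊤} ψ → ψ.eval M γ = ⊤ :=
    fun h => h.eval_eq_top M γ fun _ hχ => hχ.2
  refine ⟨fun h => M.ultra.1.bot_ne_top (hsound h), fun ψ h hψ => ⟨hψ, hsound h⟩, ?_, ?_⟩
  · rintro φ ψ ⟨⟨hφ, hψ⟩, hor⟩
    exact (M.eq_top_or_eq_top_of_sup_eq_top hor).imp (⟨hφ, ·⟩) (⟨hψ, ·⟩)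
  · exact fun φ hφ => (M.sat_box_iff γ φ).trans ⟨(⟨hφ, ·⟩), And.right⟩
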